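/- Let M be a nonempty set equipped with a σ-algebra in which every singleton is measurable, and let f : M → M be a map such that for every y ∈ M the fiber f⁻¹({y}) has exactly k elements, where k ≥ 1 is a fixed integer. Equip M_f := { x : ℤ → M | f(x(n)) = x(n+1) for all n } with the trace of the product σ-algebra of M^ℤ, and let σ : M_f → M_f be the left shift (σx)(n) = x(n+1). Then there exists a measure ν^r on M_f such that: (1) ν^r({ y ∈ M_f : y(0) = x₀ }) = 1 for every x₀ ∈ M; and (2) ν^r(σ(A)) = ν^r(A)/k for every measurable set A ⊆ M_f. -/

import Mathlib

open MeasureTheory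

/-- The left shift on the space of orbits of `f`. -/
def orbitShift {M : Type*} (f : M → M)
    (x : {x : ℤ → M // ∀ n : ℤ, f (x n) = x (n + 1)}) :
    {x : ℤ → M // ∀ n : ℤ, f (x n) = x (n + 1)} :=
  ⟨fun n => x.1 (n + 1), fun n => x.2 (n + 1)⟩

/-!
Label the points of every fiber `f ⁻¹' {z}` by `Fin k`, i.e. fix `η : M × Fin k ≃ M` with
`f (η (z, j)) = z`. A point `z` and a sequence of labels `ω : ℕ → Fin k` determine an orbit
through `z`: forwards it is `f^[n] z`, backwards the `m`-th step goes to the preimage labelled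
`ω m`. Pushing the uniform Bernoulli measure on label sequences forward gives a probability
measure `P z` on the orbits through `z`, and `ν := ∑ z, P z`.

Shifting the orbit coded by `(z, ω)` gives the orbit coded by `(η (z, ω 0), ω ∘ succ)`. Since
`ω 0` is uniform and independent of `ω ∘ succ`, whose law is again Bernoulli,
`P z (σ A) = ∑ j, P (η (z, j)) A / k`, and summing over `z` reindexes along `η`.
-/

open ProbabilityTheory Set Function

lemma DependsOn.measurable_of_finite {ι α β : Type*} [Countable α] [MeasurableSpace α]
    [MeasurableSingletonClass α] [MeasurableSpace β] {g : (ι → α) → β} {s : Set ι}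
    (hs : s.Finite) (hg : DependsOn g s) : Measurable g := by
  cases isEmpty_or_nonempty β
  · have : IsEmpty (ι → α) := ⟨fun x => isEmptyElim (g x)⟩
    exact measurable_of_empty g
  obtain ⟨h, rfl⟩ := dependsOn_iff_exists_comp.1 hg
  have : Finite s := hs
  exact (measurable_of_countable h).comp (measurable_pi_lambda _ fun i => measurable_pi_apply _)

lemma infinitePi_head_tail {α : Type*} [mα : MeasurableSpace α] (μ : Measure α)
    [IsProbabilityMeasure μ] {T : Set α} {S : Set (ℕ → α)} (hT : MeasurableSet T)
    (hS : MeasurableSet S) :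
    Measure.infinitePi (fun _ => μ) {ω | ω 0 ∈ T ∧ (fun n => ω (n + 1)) ∈ S}
      = μ T * Measure.infinitePi (fun _ => μ) S := by
  set B := Measure.infinitePi fun _ : ℕ => μ
  let m : ℕ → MeasurableSpace (ℕ → α) := fun i => mα.comap (fun ω => ω i)
  have hindep : iIndep m B := (iIndepFun_iff_iIndep _ _ _).1
    (iIndepFun_infinitePi (X := fun _ x => x) fun _ => measurable_id)
  have hsplit : Indep (⨆ i ∈ ({0} : Set ℕ), m i) (⨆ i ∈ ({0}ᶜ : Set ℕ), m i) B :=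
    indep_iSup_of_disjoint (fun i => (measurable_pi_apply i).comap_le) hindep
      disjoint_compl_right
  have hhead : MeasurableSet[⨆ i ∈ ({0} : Set ℕ), m i] {ω | ω 0 ∈ T} :=
    le_iSup₂ (f := fun i (_ : i ∈ ({0} : Set ℕ)) => m i) 0 rfl _ ⟨T, hT, rfl⟩
  have htail : Measurable[⨆ i ∈ ({0}ᶜ : Set ℕ), m i] (fun ω : ℕ → α => fun n => ω (n + 1)) :=
    @measurable_pi_lambda _ _ _ (⨆ i ∈ ({0}ᶜ : Set ℕ), m i) _ _ fun n => Measurable.of_comap_le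
      (le_iSup₂ (f := fun i (_ : i ∈ ({0}ᶜ : Set ℕ)) => m i) (n + 1) n.succ_ne_zero)
  have hshift : B.map (fun ω n => ω (n + 1)) = B :=
    Measure.map_infinitePi_infinitePi_of_inj (P := fun _ => μ) Nat.succ_injective
  calc B {ω | ω 0 ∈ T ∧ (fun n => ω (n + 1)) ∈ S}
      = B ((fun ω => ω 0) ⁻¹' T) * B ((fun ω n => ω (n + 1)) ⁻¹' S) :=
        (Indep_iff _ _ _).1 hsplit _ _ hhead (htail hS)
    _ = μ T * B S := by
        rw [← Measure.map_apply (measurable_pi_apply 0) hT, Measure.infinitePi_map_eval,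
          ← Measure.map_apply (by fun_prop) hS, hshift]

lemma exists_equiv_prod_fin_of_ncard_preimage {X Y : Type*} (f : X → Y) {k : ℕ} (hk : k ≠ 0)
    (hfib : ∀ y, (f ⁻¹' {y}).ncard = k) : ∃ η : Y × Fin k ≃ X, ∀ p, f (η p) = p.1 := by
  have hE : ∀ y, Nonempty (Fin k ≃ f ⁻¹' {y}) := fun y => by
    have : Finite (f ⁻¹' {y}) := Set.finite_of_ncard_ne_zero (by rw [hfib y]; exact hk)
    exact ⟨(Finite.equivFinOfCardEq (by rw [Nat.card_coe_set_eq, hfib y])).symm⟩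
  refine ⟨(Equiv.sigmaEquivProd Y (Fin k)).symm.trans
    ((Equiv.sigmaCongrRight fun y => (hE y).some).trans (Equiv.sigmaFiberEquiv f)), ?_⟩
  rintro ⟨y, j⟩
  exact ((hE y).some j).2

abbrev OrbitSpace {M : Type*} (f : M → M) : Type _ :=
  {x : ℤ → M // ∀ n : ℤ, f (x n) = x (n + 1)}

section Shift

variable {M : Type*} (f : M → M)

def orbitShiftInv (x : OrbitSpace f) : OrbitSpace f :=
  ⟨fun n => x.1 (n - 1), fun n => by simpa using x.2 (n - 1)⟩

lemma orbitShiftInv_orbitShift (x : OrbitSpace f) : orbitShiftInv f (orbitShift f x) = x := by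
  ext n; simp [orbitShiftInv, orbitShift]

lemma orbitShift_orbitShiftInv (x : OrbitSpace f) : orbitShift f (orbitShiftInv f x) = x := by
  ext n; simp [orbitShiftInv, orbitShift]

lemma orbitShift_injective : Injective (orbitShift f) :=
  LeftInverse.injective (orbitShiftInv_orbitShift f)

lemma image_orbitShift (A : Set (OrbitSpace f)) : orbitShift f '' A = orbitShiftInv f ⁻¹' A :=
  congrFun (image_eq_preimage_of_inverse (orbitShiftInv_orbitShift f)
    (orbitShift_orbitShiftInv f)) A

variable [MeasurableSpace M]

lemma measurable_orbitSpace_apply (n : ℤ) : Measurable fun x : OrbitSpace f => x.1 n :=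
  (measurable_pi_apply n).comp measurable_subtype_coe

lemma measurable_orbitShiftInv : Measurable (orbitShiftInv f) :=
  .subtype_mk <| measurable_pi_lambda _ fun n => measurable_orbitSpace_apply f (n - 1)

lemma measurableSet_image_orbitShift {A : Set (OrbitSpace f)} (hA : MeasurableSet A) :
    MeasurableSet (orbitShift f '' A) := by
  rw [image_orbitShift]
  exact measurable_orbitShiftInv f hA

end Shift

section CodedOrbit

variable {M α : Type*} {f : M → M} (e : M × α → M)

def backwardOrbit : M → (ℕ → α) → ℕ → M
  | z, _, 0 => z
  | z, ω, m + 1 => backwardOrbit (e (z, ω 0)) (fun n => ω (n + 1)) m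

variable {e}

lemma apply_backwardOrbit_succ (he : ∀ p, f (e p) = p.1) (z : M) (ω : ℕ → α) (m : ℕ) :
    f (backwardOrbit e z ω (m + 1)) = backwardOrbit e z ω m := by
  induction m generalizing z ω with
  | zero => exact he _
  | succ m ih => exact ih (e (z, ω 0)) fun n => ω (n + 1)

lemma dependsOn_backwardOrbit (z : M) (m : ℕ) :
    DependsOn (fun ω => backwardOrbit e z ω m) (Iio m) := by
  induction m generalizing z with
  | zero => intro _ _ _; rfl
  | succ m ih =>
    intro ω ω' h
    have h0 : ω 0 = ω' 0 := h 0 (Nat.succ_pos m)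
    simp only [backwardOrbit, h0]
    exact ih _ fun i hi => h (i + 1) (Nat.succ_lt_succ hi)

def codedOrbitFun (f : M → M) (e : M × α → M) (z : M) (ω : ℕ → α) : ℤ → M
  | .ofNat m => f^[m] z
  | .negSucc m => backwardOrbit e z ω (m + 1)

lemma apply_codedOrbitFun (he : ∀ p, f (e p) = p.1) (z : M) (ω : ℕ → α) :
    ∀ n, f (codedOrbitFun f e z ω n) = codedOrbitFun f e z ω (n + 1)
  | .ofNat m => (iterate_succ_apply' f m z).symm
  | .negSucc 0 => apply_backwardOrbit_succ he z ω 0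
  | .negSucc (m + 1) => apply_backwardOrbit_succ he z ω (m + 1)

def codedOrbit (he : ∀ p, f (e p) = p.1) (z : M) (ω : ℕ → α) : OrbitSpace f :=
  ⟨codedOrbitFun f e z ω, apply_codedOrbitFun he z ω⟩

variable (he : ∀ p, f (e p) = p.1)

@[simp] lemma codedOrbit_zero (z : M) (ω : ℕ → α) : (codedOrbit he z ω).1 0 = z := rfl

lemma orbitShift_codedOrbit (z : M) (ω : ℕ → α) :
    orbitShift f (codedOrbit he (e (z, ω 0)) fun n => ω (n + 1)) = codedOrbit he z ω := by
  ext n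
  match n with
  | .ofNat m => exact congrArg f^[m] (he _)
  | .negSucc 0 => rfl
  | .negSucc (m + 1) => rfl

lemma measurable_codedOrbit [MeasurableSpace M] [Countable α] [MeasurableSpace α]
    [MeasurableSingletonClass α] (z : M) : Measurable (codedOrbit he z) := by
  refine .subtype_mk <| measurable_pi_lambda _ fun n => ?_
  match n with
  | .ofNat _ => exact measurable_const
  | .negSucc _ => exact (dependsOn_backwardOrbit z _).measurable_of_finite (finite_Iio _)

end CodedOrbit

noncomputable def uniformSeq (α : Type*) [Fintype α] [Nonempty α] [MeasurableSpace α] :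
    Measure (ℕ → α) :=
  Measure.infinitePi fun _ => (PMF.uniformOfFintype α).toMeasure

instance {α : Type*} [Fintype α] [Nonempty α] [MeasurableSpace α] :
    IsProbabilityMeasure (uniformSeq α) := by
  unfold uniformSeq; infer_instance

lemma uniformSeq_head_tail {α : Type*} [Fintype α] [Nonempty α] [MeasurableSpace α]
    [MeasurableSingletonClass α] (j : α) {S : Set (ℕ → α)} (hS : MeasurableSet S) :
    uniformSeq α {ω | ω 0 = j ∧ (fun n => ω (n + 1)) ∈ S}
      = uniformSeq α S / Fintype.card α := by
  rw [ENNReal.div_eq_inv_mul, ← PMF.uniformOfFintype_apply j,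
    ← PMF.toMeasure_apply_singleton _ j (measurableSet_singleton j)]
  exact infinitePi_head_tail _ (measurableSet_singleton j) hS

section OrbitMeasure

variable {M α : Type*} [MeasurableSpace M] [Fintype α] [Nonempty α] [MeasurableSpace α]
  [MeasurableSingletonClass α] {f : M → M} {e : M × α → M} (he : ∀ p, f (e p) = p.1)

noncomputable def orbitMeasure (z : M) : Measure (OrbitSpace f) :=
  (uniformSeq α).map (codedOrbit he z)

lemma orbitMeasure_apply (z : M) {A : Set (OrbitSpace f)} (hA : MeasurableSet A) :
    orbitMeasure he z A = uniformSeq α (codedOrbit he z ⁻¹' A) :=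
  Measure.map_apply (measurable_codedOrbit he z) hA

lemma map_orbitMeasure_eval_zero (z : M) :
    (orbitMeasure he z).map (fun y => y.1 0) = Measure.dirac z := by
  rw [orbitMeasure, Measure.map_map (measurable_orbitSpace_apply f 0) (measurable_codedOrbit he z)]
  simp only [comp_def, codedOrbit_zero, Measure.map_const, measure_univ, one_smul]

lemma map_sum_orbitMeasure_eval_zero :
    (Measure.sum (orbitMeasure he)).map (fun y => y.1 0) = Measure.count := by
  rw [Measure.map_sum (measurable_orbitSpace_apply f 0).aemeasurable]
  simp_rw [map_orbitMeasure_eval_zero]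
  rfl

lemma orbitMeasure_image_orbitShift (z : M) {A : Set (OrbitSpace f)} (hA : MeasurableSet A) :
    orbitMeasure he z (orbitShift f '' A)
      = ∑ j, orbitMeasure he (e (z, j)) A / Fintype.card α := by
  have hpre : codedOrbit he z ⁻¹' (orbitShift f '' A)
      = ⋃ j, {ω | ω 0 = j ∧ (fun n => ω (n + 1)) ∈ codedOrbit he (e (z, j)) ⁻¹' A} := by
    ext ω
    simp only [mem_preimage, mem_iUnion, mem_ofPred_eq, exists_eq_left',
      ← orbitShift_codedOrbit he z ω, (orbitShift_injective f).mem_set_image]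
  rw [orbitMeasure_apply he z (measurableSet_image_orbitShift f hA), hpre,
    measure_iUnion, tsum_fintype]
  · refine Finset.sum_congr rfl fun j _ => ?_
    rw [orbitMeasure_apply he _ hA, uniformSeq_head_tail j (measurable_codedOrbit he _ hA)]
  · intro i j hij
    exact disjoint_left.2 fun ω hi hj => hij (hi.1.symm.trans hj.1)
  · exact fun j => ((measurableSet_singleton j).preimage (measurable_pi_apply 0)).inter
      ((measurable_codedOrbit he _ hA).preimage
        (measurable_pi_lambda _ fun n => measurable_pi_apply (n + 1)))

lemma sum_orbitMeasure_image_orbitShift (η : M × α ≃ M) (hη : ∀ p, f (η p) = p.1)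
    {A : Set (OrbitSpace f)} (hA : MeasurableSet A) :
    Measure.sum (orbitMeasure hη) (orbitShift f '' A)
      = Measure.sum (orbitMeasure hη) A / Fintype.card α := by
  rw [Measure.sum_apply _ (measurableSet_image_orbitShift f hA), Measure.sum_apply _ hA]
  simp_rw [orbitMeasure_image_orbitShift hη _ hA, ← tsum_fintype (L := .unconditional _)]
  calc ∑' z, ∑' j, orbitMeasure hη (η (z, j)) A / Fintype.card α
      = ∑' w, orbitMeasure hη w A / Fintype.card α := by
        rw [← ENNReal.tsum_prod' (f := fun p => orbitMeasure hη (η p) A / Fintype.card α),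
          η.tsum_eq (fun w => orbitMeasure hη w A / Fintype.card α)]
    _ = (∑' w, orbitMeasure hη w A) / Fintype.card α := by
        simp_rw [div_eq_mul_inv]
        exact ENNReal.tsum_mul_right

end OrbitMeasure

theorem exists_r_measure_general {M : Type*} [MeasurableSpace M]
    [MeasurableSingletonClass M] (f : M → M)
    (k : ℕ) (hk : 1 ≤ k)
    (hfib : ∀ y : M, (f ⁻¹' {y}).ncard = k) :
    ∃ ν : Measure {x : ℤ → M // ∀ n : ℤ, f (x n) = x (n + 1)},
      (∀ x₀ : M, ν {y | y.1 0 = x₀} = 1) ∧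
      (∀ A : Set {x : ℤ → M // ∀ n : ℤ, f (x n) = x (n + 1)},
        MeasurableSet A → ν (orbitShift f '' A) = ν A / k) := by
  obtain ⟨η, hη⟩ := exists_equiv_prod_fin_of_ncard_preimage f (by omega) hfib
  have : NeZero k := ⟨by omega⟩
  refine ⟨Measure.sum (orbitMeasure hη), fun x₀ => ?_, fun A hA => ?_⟩
  · rw [← Measure.count_singleton x₀, ← map_sum_orbitMeasure_eval_zero hη,
      Measure.map_apply (measurable_orbitSpace_apply f 0) (measurableSet_singleton x₀)]
    rfl
  · rw [sum_orbitMeasure_image_orbitShift η hη hA, Fintype.card_fin]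

/-- if every fiber of `f` has exactly `k ≥ 1` elements, then on the
space of orbits `M_f` (with the trace of the product σ-algebra) there is a measure
`ν^r` giving each fiber `π⁻¹(x₀)` measure `1` and satisfying
`ν^r (σ(A)) = ν^r(A) / k` for every measurable `A`. -/
theorem exists_r_measure {M : Type*} [Nonempty M] [MeasurableSpace M]
    [MeasurableSingletonClass M] (f : M → M)
    (k : ℕ) (hk : 1 ≤ k)
    (hfib : ∀ y : M, (f ⁻¹' {y}).ncard = k) :
    ∃ ν : Measure {x : ℤ → M // ∀ n : ℤ, f (x n) = x (n + 1)},
      (∀ x₀ : M, ν {y | y.1 0 = x₀} = 1) ∧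
      (∀ A : Set {x : ℤ → M // ∀ n : ℤ, f (x n) = x (n + 1)},
        MeasurableSet A → ν (orbitShift f '' A) = ν A / k) :=
  exists_r_measure_general f k hk hfib
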